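/- arXiv:1305.7085 — 3 statements merged into one kernel-verified Lean document; each statement's English description precedes it below -/
import Mathlib

section
/- Consider the cubic characteristic polynomial p(s) = s³ + K_D·s² + K_P·s + K_I with real coefficients. All roots of p have negative real part if and only if K_D > 0, K_I > 0, and K_D·K_P > K_I (the Routh–Hurwitz condition). -/
theorem routh_hurwitz_cubic (K_P K_I K_D : ℝ) :
    (∀ z : ℂ, z ^ 3 + (K_D : ℂ) * z ^ 2 + (K_P : ℂ) * z + (K_I : ℂ) = 0 → z.re < 0) ↔
      (K_D > 0 ∧ K_I > 0 ∧ K_D * K_P > K_I) := by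
  constructor
  · intro h
    obtain ⟨r, hfr⟩ : ∃ r : ℝ, r^3 + K_D*r^2 + K_P*r + K_I = 0 := by
      set M : ℝ := 1 + |K_D| + |K_P| + |K_I| with hMdef
      have habD := abs_nonneg K_D
      have habP := abs_nonneg K_P
      have habI := abs_nonneg K_I
      have hDle := le_abs_self K_D
      have hDge := neg_abs_le K_D
      have hPle := le_abs_self K_P
      have hPge := neg_abs_le K_P
      have hIle := le_abs_self K_I
      have hIge := neg_abs_le K_I
      have hM1 : 1 ≤ M := by rw [hMdef]; linarith
      have hM2 : M ≤ M^2 := by nlinarith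
      have hfneg : (fun x : ℝ => x^3 + K_D*x^2 + K_P*x + K_I) (-M) < 0 := by
        show (-M)^3 + K_D*(-M)^2 + K_P*(-M) + K_I < 0
        nlinarith [sq_nonneg M, mul_le_mul_of_nonneg_right hDle (sq_nonneg M)]
      have hfpos : (0:ℝ) < (fun x : ℝ => x^3 + K_D*x^2 + K_P*x + K_I) M := by
        show 0 < M^3 + K_D*M^2 + K_P*M + K_I
        nlinarith [sq_nonneg M]
      obtain ⟨r, -, hr0⟩ := intermediate_value_Icc
        (f := fun x : ℝ => x^3 + K_D*x^2 + K_P*x + K_I)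
        (by linarith : (-M) ≤ M)
        (Continuous.continuousOn (by continuity)) ⟨hfneg.le, hfpos.le⟩
      exact ⟨r, hr0⟩
    have hfrC : (r:ℂ)^3 + (K_D:ℂ)*(r:ℂ)^2 + (K_P:ℂ)*(r:ℂ) + (K_I:ℂ) = 0 := by
      exact_mod_cast congrArg (Complex.ofReal) hfr
    have hr : r < 0 := by
      have := h r (by linear_combination hfrC)
      simpa using this
    obtain ⟨b, hbdef⟩ : ∃ b : ℝ, b = K_D + r := ⟨_, rfl⟩
    obtain ⟨c, hcdef⟩ : ∃ c : ℝ, c = K_P + r*K_D + r^2 := ⟨_, rfl⟩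
    have hbC : (b:ℂ) = (K_D:ℂ) + (r:ℂ) := by exact_mod_cast congrArg Complex.ofReal hbdef
    have hcC : (c:ℂ) = (K_P:ℂ) + (r:ℂ)*(K_D:ℂ) + (r:ℂ)^2 := by
      rw [hcdef]; push_cast; ring
    have key : 0 < b ∧ 0 < c := by
      rcases le_or_gt (b^2 - 4*c) 0 with hdisc | hdisc
      · -- complex conjugate pair of roots of the quadratic factor
        obtain ⟨t, htnn, ht⟩ : ∃ t : ℝ, 0 ≤ t ∧ t^2 = 4*c - b^2 :=
          ⟨Real.sqrt (4*c - b^2), Real.sqrt_nonneg _, Real.sq_sqrt (by linarith)⟩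
        have htC : (t:ℂ)^2 = 4*(c:ℂ) - (b:ℂ)^2 := by exact_mod_cast congrArg Complex.ofReal ht
        set z0 : ℂ := ⟨-b/2, t/2⟩ with hz0
        have hz0' : z0 = (-(b:ℂ) + (t:ℂ)*Complex.I)/2 := by
          rw [hz0]; apply Complex.ext <;> simp
        have hq : z0^2 + (b:ℂ)*z0 + (c:ℂ) = 0 := by
          rw [hz0']
          linear_combination Complex.I_sq * (t:ℂ)^2/4 - htC/4
        have hroot : z0^3 + (K_D:ℂ)*z0^2 + (K_P:ℂ)*z0 + (K_I:ℂ) = 0 := by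
          linear_combination (z0 - (r:ℂ)) * hq + hfrC + ((r:ℂ)*z0 - z0^2) * hbC + ((r:ℂ) - z0) * hcC
        have hlt := h z0 hroot
        have hre : z0.re = -b/2 := rfl
        rw [hre] at hlt
        have hb : 0 < b := by linarith
        exact ⟨hb, by nlinarith [sq_nonneg b]⟩
      · -- two real roots of the quadratic factor
        obtain ⟨s, hsnn, hs⟩ : ∃ s : ℝ, 0 ≤ s ∧ s^2 = b^2 - 4*c :=
          ⟨Real.sqrt (b^2 - 4*c), Real.sqrt_nonneg _, Real.sq_sqrt hdisc.le⟩
        obtain ⟨x1, hx1⟩ : ∃ x1 : ℝ, x1 = (-b + s)/2 := ⟨_, rfl⟩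
        have hq : x1^2 + b*x1 + c = 0 := by rw [hx1]; linear_combination hs/4
        have hroot : x1^3 + K_D*x1^2 + K_P*x1 + K_I = 0 := by
          linear_combination (x1 - r) * hq + hfr + (r*x1 - x1^2) * hbdef + (r - x1) * hcdef
        have hlt : x1 < 0 := by
          have := h x1 (by exact_mod_cast congrArg Complex.ofReal hroot)
          simpa using this
        have hb : 0 < b := by rw [hx1] at hlt; linarith
        refine ⟨hb, ?_⟩
        have hsb : s < b := by rw [hx1] at hlt; linarith
        nlinarith
    obtain ⟨hb, hc⟩ := key
    have hKD : K_D = b - r := by linarith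
    have hKP : K_P = c - r*b := by linear_combination -hcdef - r*hKD
    have hKI : K_I = -(r*c) := by linear_combination hfr + r*hcdef
    refine ⟨by linarith, ?_, ?_⟩
    · rw [hKI]; nlinarith [mul_neg_of_neg_of_pos hr hc]
    · have hid : K_D*K_P - K_I = b*c - r*b^2 + r^2*b := by rw [hKD, hKP, hKI]; ring
      nlinarith [mul_pos hb hc, mul_pos (mul_pos hb hb) (neg_pos.2 hr),
        mul_nonneg (sq_nonneg r) hb.le]
  · rintro ⟨hD, hI, hDP⟩
    intro z hz
    obtain ⟨x, y⟩ := z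
    have hre := congrArg Complex.re hz
    have him := congrArg Complex.im hz
    simp only [pow_succ, pow_zero, one_mul, Complex.add_re, Complex.add_im, Complex.mul_re,
      Complex.mul_im, Complex.ofReal_re, Complex.ofReal_im, Complex.zero_re,
      Complex.zero_im] at hre him
    ring_nf at hre him
    show x < 0
    have hP : K_P > 0 := by nlinarith
    by_contra hx
    push_neg at hx
    rcases eq_or_ne y 0 with hy | hy
    · subst hy
      ring_nf at hre
      nlinarith [mul_nonneg (mul_nonneg hx hx) hx, mul_nonneg hx hx,
        mul_nonneg hD.le (mul_nonneg hx hx), mul_nonneg hP.le hx]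
    · have hy2 : y^2 = 3*x^2 + 2*K_D*x + K_P := by
        have hfac : y * (3*x^2 - y^2 + 2*K_D*x + K_P) = 0 := by linarith [him]
        rcases mul_eq_zero.1 hfac with h' | h'
        · exact absurd h' hy
        · linarith
      nlinarith [mul_nonneg (mul_nonneg hx hx) hx, mul_nonneg hx hx,
        mul_nonneg hD.le (mul_nonneg hx hx), mul_nonneg hP.le hx,
        mul_nonneg (mul_pos hD hD).le hx]
end

section
/- Suppose ẏ(t) = φ + α·u(t) on the interval [t-L, t] where φ is an unknown real constant, α ≠ 0, L > 0, and u, y are continuous with y differentiable. Then φ is recovered exactly by the integral formula φ = -(6/L³)·∫_{t-L}^{t} ((L - 2σ')·y(t-L+σ') + α·σ'·(L - σ')·u(t-L+σ')) dσ', where σ' = σ - (t-L) is time measured from the start of the window. Equivalently, writing the window as [0, L] with ẏ = φ + αu on [0,L]: φ = -(6/L³)·∫₀^L ((L-2σ)y(σ) + ασ(L-σ)u(σ)) dσ. -/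
/-! Integrating by parts against the weight `σ (L - σ)`, which vanishes at both ends of `[0, L]`,
turns `∫ (L - 2σ) y` into `-∫ σ (L - σ) (φ + α u)`. Since `∫₀ᴸ σ (L - σ) = L³ / 6`, the
unknown `φ` is the only term left after moving the `u`-part to the other side. -/

open intervalIntegral Set

theorem integral_mul_sub_self (L : ℝ) : ∫ x in (0:ℝ)..L, x * (L - x) = L ^ 3 / 6 := by
  have h : ∀ x : ℝ, x * (L - x) = L * x - x ^ 2 := fun x => by ring
  simp only [h]
  rw [integral_sub (by apply Continuous.intervalIntegrable; fun_prop)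
      (by apply Continuous.intervalIntegrable; fun_prop),
    integral_const_mul, integral_id, integral_pow]
  ring

theorem integral_by_parts_mul_sub_self_eq_zero {y y' : ℝ → ℝ} {L : ℝ}
    (hy : ∀ x ∈ uIcc 0 L, HasDerivAt y (y' x) x)
    (hy' : IntervalIntegrable y' MeasureTheory.volume 0 L) :
    ∫ x in (0:ℝ)..L, ((L - 2 * x) * y x + x * (L - x) * y' x) = 0 := by
  have hw : ∀ x ∈ uIcc (0:ℝ) L, HasDerivAt (fun x => x * (L - x)) (L - 2 * x) x := fun x _ =>
    ((hasDerivAt_id' x).mul ((hasDerivAt_id' x).const_sub L)).congr_deriv (by ring)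
  rw [integral_deriv_mul_eq_sub hw hy
    (by apply Continuous.intervalIntegrable; fun_prop) hy']
  ring

theorem phi_estimation_formula_general
    (y u : ℝ → ℝ) (φ α L : ℝ) (hL : L > 0)
    (hu : ContinuousOn u (Set.Icc 0 L))
    (hy : ∀ σ ∈ Set.Icc (0:ℝ) L, HasDerivAt y (φ + α * u σ) σ) :
    φ = -(6 / L ^ 3) *
        ∫ σ in (0:ℝ)..L, ((L - 2 * σ) * y σ + α * σ * (L - σ) * u σ) := by
  rw [← uIcc_of_le hL.le] at hu hy
  have hy_cont : ContinuousOn y (uIcc 0 L) := fun x hx =>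
    (hy x hx).continuousAt.continuousWithinAt
  have hibp := integral_by_parts_mul_sub_self_eq_zero hy
    (by apply ContinuousOn.intervalIntegrable; fun_prop)
  have hsplit : ∀ σ, (L - 2 * σ) * y σ + α * σ * (L - σ) * u σ =
      ((L - 2 * σ) * y σ + σ * (L - σ) * (φ + α * u σ)) - φ * (σ * (L - σ)) := fun σ => by ring
  simp only [hsplit]
  rw [integral_sub (by apply ContinuousOn.intervalIntegrable; fun_prop)
      (by apply Continuous.intervalIntegrable; fun_prop),
    integral_const_mul, hibp, integral_mul_sub_self]
  field_simp
  ring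

theorem phi_estimation_formula
    (y u : ℝ → ℝ) (φ α L : ℝ) (hα : α ≠ 0) (hL : L > 0)
    (hu : ContinuousOn u (Set.Icc 0 L))
    (hy : ∀ σ ∈ Set.Icc (0:ℝ) L, HasDerivAt y (φ + α * u σ) σ) :
    φ = -(6 / L ^ 3) *
        ∫ σ in (0:ℝ)..L, ((L - 2 * σ) * y σ + α * σ * (L - σ) * u σ) :=
  phi_estimation_formula_general y u φ α L hL hu hy
end

section
/- Let u, u' : [0, τ] → ℝ be continuous with u ≠ u'. Then there exists ν ≥ 1 such that the solutions y, y' of y^{(ν)} = u and y'^{(ν)} = u' with zero initial conditions at 0 satisfy y(τ) ≠ y'(τ). (Consequence of the Cauchy formula and Lerch's theorem: the family of maps u ↦ y(τ) over all ν separates distinct inputs.) -/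
/-!
If all the values `y(τ)` agreed, `g = u - u'` would have vanishing moments
`∫₀^τ (τ - σ)ⁿ g(σ) dσ` for every `n`. Hence `g` is orthogonal to every polynomial on `[0, τ]`,
and by Weierstrass approximation to itself, so `∫₀^τ g² = 0` and the continuous function `g`
vanishes on `[0, τ]` (Lerch's theorem).
-/

open Set Polynomial MeasureTheory intervalIntegral
open scoped Interval

section Lerch

variable {g : ℝ → ℝ} {a b : ℝ}

theorem integral_eval_mul_eq_zero_of_forall_integral_pow_sub_mul_eq_zero (hab : a ≤ b)
    (hg : ContinuousOn g (Icc a b)) {c : ℝ} (h : ∀ n : ℕ, ∫ x in a..b, (c - x) ^ n * g x = 0)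
    (p : ℝ[X]) : ∫ x in a..b, p.eval x * g x = 0 := by
  have shifted : ∀ q : ℝ[X], ∫ x in a..b, q.eval (c - x) * g x = 0 := by
    intro q
    induction q using Polynomial.induction_on' with
    | add q r hq hr =>
      have integrable : ∀ s : ℝ[X], IntervalIntegrable (fun x ↦ s.eval (c - x) * g x) volume a b :=
        fun s ↦ (((s.continuous.comp (continuous_sub_left c)).continuousOn).mul hg
          ).intervalIntegrable_of_Icc hab
      simp only [eval_add, add_mul]
      rw [integral_add (integrable q) (integrable r), hq, hr, add_zero]
    | monomial n r =>
      simp only [eval_monomial, mul_assoc, intervalIntegral.integral_const_mul, h, mul_zero]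
  have := shifted (p.comp (C c - X))
  simpa only [eval_comp, eval_sub, eval_C, eval_X, sub_sub_cancel] using this

theorem integral_mul_self_eq_zero_of_forall_integral_eval_mul_eq_zero (hab : a ≤ b)
    (hg : ContinuousOn g (Icc a b)) (h : ∀ p : ℝ[X], ∫ x in a..b, p.eval x * g x = 0) :
    ∫ x in a..b, g x * g x = 0 := by
  obtain ⟨M, hM⟩ := isCompact_Icc.exists_bound_of_continuousOn hg
  have hM₀ : 0 ≤ M := (norm_nonneg _).trans (hM a (left_mem_Icc.mpr hab))
  refine eq_of_forall_dist_le fun ε hε ↦ ?_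
  have hδ : 0 < ε / (M * (b - a) + 1) := div_pos hε (by nlinarith)
  obtain ⟨p, hp⟩ := exists_polynomial_near_of_continuousOn a b g hg _ hδ
  have hsub : ∫ x in a..b, g x * g x = ∫ x in a..b, (g x - p.eval x) * g x := by
    rw [← sub_zero (∫ x in a..b, g x * g x), ← h p,
      ← integral_sub (f := fun x ↦ g x * g x) (g := fun x ↦ p.eval x * g x)
        ((hg.mul hg).intervalIntegrable_of_Icc hab)
        ((p.continuous.continuousOn.mul hg).intervalIntegrable_of_Icc hab)]
    simp only [sub_mul]
  have hbound : ∀ x ∈ Ι a b, ‖(g x - p.eval x) * g x‖ ≤ ε / (M * (b - a) + 1) * M := by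
    intro x hx
    have hx : x ∈ Icc a b := Ioc_subset_Icc_self (uIoc_of_le hab ▸ hx)
    rw [norm_mul, Real.norm_eq_abs, abs_sub_comm]
    exact mul_le_mul (hp x hx).le (hM x hx) (norm_nonneg _) hδ.le
  calc dist (∫ x in a..b, g x * g x) 0
      = ‖∫ x in a..b, (g x - p.eval x) * g x‖ := by rw [dist_zero_right, hsub]
    _ ≤ ε / (M * (b - a) + 1) * M * |b - a| := norm_integral_le_of_norm_le_const hbound
    _ ≤ ε := by
      rw [abs_of_nonneg (sub_nonneg.mpr hab), mul_assoc, div_mul_eq_mul_div,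
        div_le_iff₀ (by nlinarith)]
      nlinarith [mul_nonneg hM₀ (sub_nonneg.mpr hab)]

theorem eqOn_zero_of_integral_mul_self_eq_zero (hab : a < b) (hg : ContinuousOn g (Icc a b))
    (h : ∫ x in a..b, g x * g x = 0) : EqOn g 0 (Icc a b) := by
  intro x hx
  by_contra hgx
  have hpos : ∫ _ in a..b, (0 : ℝ) < ∫ x in a..b, g x * g x :=
    integral_lt_integral_of_continuousOn_of_le_of_exists_lt hab continuousOn_const
      (hg.mul hg) (fun y _ ↦ mul_self_nonneg (g y)) ⟨x, hx, mul_self_pos.mpr hgx⟩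
  simp [h] at hpos

theorem eqOn_zero_of_forall_integral_pow_sub_mul_eq_zero (hab : a < b)
    (hg : ContinuousOn g (Icc a b)) {c : ℝ} (h : ∀ n : ℕ, ∫ x in a..b, (c - x) ^ n * g x = 0) :
    EqOn g 0 (Icc a b) :=
  eqOn_zero_of_integral_mul_self_eq_zero hab hg
    (integral_mul_self_eq_zero_of_forall_integral_eval_mul_eq_zero hab.le hg
      (integral_eval_mul_eq_zero_of_forall_integral_pow_sub_mul_eq_zero hab.le hg h))

end Lerch

theorem iterated_integrals_separate
    (τ : ℝ) (hτ : τ > 0) (u u' : ℝ → ℝ)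
    (hu : ContinuousOn u (Set.Icc 0 τ)) (hu' : ContinuousOn u' (Set.Icc 0 τ))
    (hne : ∃ x ∈ Set.Icc (0:ℝ) τ, u x ≠ u' x) :
    ∃ ν : ℕ, 1 ≤ ν ∧
      (1 / (Nat.factorial (ν - 1) : ℝ)) * (∫ σ in (0:ℝ)..τ, (τ - σ) ^ (ν - 1) * u σ) ≠
      (1 / (Nat.factorial (ν - 1) : ℝ)) * ∫ σ in (0:ℝ)..τ, (τ - σ) ^ (ν - 1) * u' σ := by
  by_contra! h
  have moments : ∀ n : ℕ, ∫ σ in (0:ℝ)..τ, (τ - σ) ^ n * (u σ - u' σ) = 0 := by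
    intro n
    have heq := mul_left_cancel₀ (by positivity) (h (n + 1) n.succ_pos)
    have integrable : ∀ v : ℝ → ℝ, ContinuousOn v (Icc 0 τ) →
        IntervalIntegrable (fun σ ↦ (τ - σ) ^ n * v σ) volume 0 τ :=
      fun v hv ↦ (((continuous_sub_left τ).pow n).continuousOn.mul hv).intervalIntegrable_of_Icc
        hτ.le
    simp only [mul_sub, Nat.add_sub_cancel] at heq ⊢
    rw [integral_sub (integrable u hu) (integrable u' hu'), heq, sub_self]
  obtain ⟨x, hx, hux⟩ := hne
  exact hux <| sub_eq_zero.mp <|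
    eqOn_zero_of_forall_integral_pow_sub_mul_eq_zero hτ (hu.sub hu') moments hx
end
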